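/- arXiv:math/9805072 — 6 statements merged into one kernel-verified Lean document; each statement's English description precedes it below -/
import Mathlib

section
/- (The Claim in the proof of Proposition 1.4.) Assume: (1) V^k = 0 for all k > N (for some fixed natural number N); (2) Condition (iii): for every k and every α ∈ V^k with dα = 0 there exist α₀ ∈ V^k and τ ∈ V^{k−1} with α = α₀ + dτ, dα₀ = 0 and Δα₀ = 0; (3) in every degree, Im d ∩ Ker Δ = Im d ∩ Im Δ. Then for every p and every p-element α_p ∈ V^p such that α_p = dγ_{p−1} = Δβ_{p+1} for some γ_{p−1} ∈ V^{p−1} and β_{p+1} ∈ V^{p+1}, there exists τ_p ∈ V^p such that α_p = dΔτ_p. In other words, Im d ∩ Im Δ = Im(d∘Δ) in every degree. -/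
/-!
Downward induction on the degree `p`, trivial above `N`. Given `α = dγ = Δβ` with `β` of degree
`p + 1`, the element `dβ` is `d`-exact and `Δ`-closed (`Δdβ = -dΔβ = -ddγ = 0`), so by (3) and
the induction hypothesis `dβ = dΔτ'`. Then `β - Δτ'` is `d`-closed, hence by (iii) equal to
`α₀ + dσ` with `Δα₀ = 0`, and `α = Δβ = Δ(Δτ' + α₀ + dσ) = Δdσ = dΔ(-σ)`.
-/

open LinearMap Submodule DirectSum

section Decomposition

variable {ι R V : Type*} [DecidableEq ι] [Semiring R] [AddCommMonoid V] [Module R V]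
  (𝒱 : ι → Submodule R V) [Decomposition 𝒱]

theorem decompose_map_apply_of_mapsTo {e : ι → ι} (he : Function.Injective e) {f : V →ₗ[R] V}
    (hf : ∀ i, ∀ x ∈ 𝒱 i, f x ∈ 𝒱 (e i)) (i : ι) (y : V) :
    (decompose 𝒱 (f y) (e i) : V) = f (decompose 𝒱 y i) := by
  induction y using Decomposition.inductionOn 𝒱 with
  | zero => simp
  | @homogeneous j y =>
    by_cases h : j = i
    · subst h
      rw [decompose_of_mem_same 𝒱 y.2, decompose_of_mem_same 𝒱 (hf j y y.2)]
    · rw [decompose_of_mem_ne 𝒱 y.2 h, decompose_of_mem_ne 𝒱 (hf j y y.2) (he.ne h), map_zero]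
  | add y z hy hz =>
    simp only [decompose_add, DirectSum.add_apply, Submodule.coe_add, map_add, hy, hz]

theorem range_inf_le_map_of_mapsTo {e : ι → ι} (he : Function.Injective e) {f : V →ₗ[R] V}
    (hf : ∀ i, ∀ x ∈ 𝒱 i, f x ∈ 𝒱 (e i)) (i : ι) :
    range f ⊓ 𝒱 (e i) ≤ map f (𝒱 i) := by
  rintro x ⟨⟨y, rfl⟩, hx⟩
  refine ⟨decompose 𝒱 y i, SetLike.coe_mem _, ?_⟩
  rw [← decompose_map_apply_of_mapsTo 𝒱 he hf, decompose_of_mem_same 𝒱 hx]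

end Decomposition

theorem range_inf_range_inf_le_range_comp {R V : Type*} [Ring R] [AddCommGroup V] [Module R V]
    {𝒱 : ℤ → Submodule R V} [Decomposition 𝒱] {d Δ : V →ₗ[R] V}
    (hd : ∀ k, ∀ x ∈ 𝒱 k, d x ∈ 𝒱 (k + 1)) (hΔ : ∀ k, ∀ x ∈ 𝒱 k, Δ x ∈ 𝒱 (k - 1))
    (hdd : d ∘ₗ d = 0) (hΔΔ : Δ ∘ₗ Δ = 0) (hdΔ : d ∘ₗ Δ + Δ ∘ₗ d = 0)
    {N : ℤ} (hbound : ∀ k, N < k → 𝒱 k = ⊥)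
    (hclosed : ∀ k, ker d ⊓ 𝒱 k ≤ ker Δ ⊔ range d)
    (hexact : ∀ k, range d ⊓ ker Δ ⊓ 𝒱 k ≤ range Δ) (p : ℤ) :
    range d ⊓ range Δ ⊓ 𝒱 p ≤ range (d ∘ₗ Δ) := by
  rintro α ⟨⟨hαd, hαΔ⟩, hαp⟩
  by_cases hp : N < p
  · rw [hbound p hp] at hαp
    exact (mem_bot R).1 hαp ▸ zero_mem _
  have hΔd (x : V) : Δ (d x) = -d (Δ x) :=
    eq_neg_of_add_eq_zero_right (by simpa using DFunLike.congr_fun hdΔ x)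
  obtain ⟨β, hβ, rfl⟩ : ∃ β ∈ 𝒱 (p + 1), Δ β = α := by
    have := range_inf_le_map_of_mapsTo 𝒱 sub_left_injective hΔ (p + 1)
    rw [add_sub_cancel_right] at this
    exact this ⟨hαΔ, hαp⟩
  have hdβ : d β ∈ range d ⊓ range Δ ⊓ 𝒱 (p + 2) := by
    have hdΔβ : d (Δ β) = 0 := range_le_ker_iff.2 hdd hαd
    have hdeg : d β ∈ 𝒱 (p + 2) := by simpa [add_assoc] using hd _ _ hβ
    exact ⟨⟨mem_range_self d β, hexact _ ⟨⟨mem_range_self d β, by simp [hΔd, hdΔβ]⟩, hdeg⟩⟩, hdeg⟩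
  obtain ⟨τ, hτ, hdΔτ⟩ : ∃ τ ∈ 𝒱 (p + 2), d (Δ τ) = d β :=
    range_inf_le_map_of_mapsTo 𝒱 Function.injective_id
      (fun k x hx => by simpa using hd _ _ (hΔ k x hx)) (p + 2)
      ⟨range_inf_range_inf_le_range_comp hd hΔ hdd hΔΔ hdΔ hbound hclosed hexact (p + 2) hdβ,
        hdβ.2⟩
  have hβτ : β - Δ τ ∈ ker d ⊓ 𝒱 (p + 1) := by
    refine ⟨by simp [hdΔτ], sub_mem hβ ?_⟩
    simpa [show p + 2 - 1 = p + 1 by ring] using hΔ _ _ hτ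
  obtain ⟨α₀, hα₀, _, ⟨σ, rfl⟩, hsum⟩ := mem_sup.1 (hclosed _ hβτ)
  refine ⟨-σ, ?_⟩
  rw [sub_eq_iff_eq_add.1 hsum.symm]
  have hΔΔτ : Δ (Δ τ) = 0 := by simpa using DFunLike.congr_fun hΔΔ τ
  simp [hΔd, mem_ker.1 hα₀, hΔΔτ]
termination_by (N + 1 - p).toNat
decreasing_by omega

theorem range_comp_le_range_inf_range {R V : Type*} [Ring R] [AddCommGroup V] [Module R V]
    {d Δ : V →ₗ[R] V} (hdΔ : d ∘ₗ Δ + Δ ∘ₗ d = 0) :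
    range (d ∘ₗ Δ) ≤ range d ⊓ range Δ := by
  refine le_inf (range_comp_le_range Δ d) ?_
  rw [eq_neg_of_add_eq_zero_left hdΔ, range_neg]
  exact range_comp_le_range d Δ

/-- the Claim in the proof of Proposition 1.4: Let `V = ⊕ₖ V^k`
be a ℤ-graded complex vector space with `d` of degree `+1`, `Δ` of degree
`-1`, `d∘d = 0`, `Δ∘Δ = 0` and `d∘Δ + Δ∘d = 0`.  Assume
(1) `V^k = 0` for all `k > N`;
(2) Condition (iii): every `d`-closed element of `V^k` is, up to a `d`-exact
    term, both `d`- and `Δ`-closed;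
(3) in every degree, `Im d ∩ Ker Δ = Im d ∩ Im Δ`.
Then for every `p` and every `α ∈ V^p` with `α = dγ = Δβ` (for some
`γ ∈ V^{p-1}`, `β ∈ V^{p+1}`) there exists `τ ∈ V^p` with `α = dΔτ`;
in other words `Im d ∩ Im Δ = Im (d∘Δ)` in every degree. -/
theorem imd_inf_imDelta_eq_im_dDelta
    {V : Type*} [AddCommGroup V] [Module ℂ V]
    (𝒱 : ℤ → Submodule ℂ V)
    (hinternal : DirectSum.IsInternal 𝒱)
    (d Δ : V →ₗ[ℂ] V)
    (hd : ∀ (k : ℤ), ∀ x ∈ 𝒱 k, d x ∈ 𝒱 (k + 1))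
    (hΔ : ∀ (k : ℤ), ∀ x ∈ 𝒱 k, Δ x ∈ 𝒱 (k - 1))
    (hdd : d ∘ₗ d = 0)
    (hΔΔ : Δ ∘ₗ Δ = 0)
    (hdΔ : d ∘ₗ Δ + Δ ∘ₗ d = 0)
    (N : ℕ)
    (hbound : ∀ k : ℤ, (N : ℤ) < k → 𝒱 k = ⊥)
    (hiii : ∀ (k : ℤ), ∀ α ∈ 𝒱 k, d α = 0 →
      ∃ α₀ ∈ 𝒱 k, ∃ τ ∈ 𝒱 (k - 1), α = α₀ + d τ ∧ d α₀ = 0 ∧ Δ α₀ = 0)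
    (h3 : ∀ k : ℤ,
      LinearMap.range d ⊓ LinearMap.ker Δ ⊓ 𝒱 k
        = LinearMap.range d ⊓ LinearMap.range Δ ⊓ 𝒱 k) :
    (∀ (p : ℤ), ∀ α ∈ 𝒱 p,
      (∃ γ ∈ 𝒱 (p - 1), α = d γ) → (∃ β ∈ 𝒱 (p + 1), α = Δ β) →
      ∃ τ ∈ 𝒱 p, α = d (Δ τ)) ∧
    (∀ k : ℤ,
      LinearMap.range d ⊓ LinearMap.range Δ ⊓ 𝒱 k
        = LinearMap.range (d ∘ₗ Δ) ⊓ 𝒱 k) := by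
  have := hinternal.chooseDecomposition
  have hclosed (k : ℤ) : ker d ⊓ 𝒱 k ≤ ker Δ ⊔ range d := by
    rintro α ⟨hdα, hα⟩
    obtain ⟨α₀, -, τ, -, rfl, -, hΔα₀⟩ := hiii k α hα hdα
    exact add_mem_sup hΔα₀ (mem_range_self d τ)
  have hle (k : ℤ) : range d ⊓ range Δ ⊓ 𝒱 k ≤ range (d ∘ₗ Δ) :=
    range_inf_range_inf_le_range_comp hd hΔ hdd hΔΔ hdΔ hbound hclosed
      (fun k => (h3 k).le.trans (inf_le_left.trans inf_le_right)) k
  refine ⟨fun p α hα ⟨γ, _, hγ⟩ ⟨β, _, hβ⟩ => ?_,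
    fun k => le_antisymm (le_inf (hle k) inf_le_right)
      (inf_le_inf_right _ (range_comp_le_range_inf_range hdΔ))⟩
  obtain ⟨τ, hτ, hdΔτ⟩ := range_inf_le_map_of_mapsTo 𝒱 Function.injective_id
    (fun k x hx => by simpa using hd _ _ (hΔ k x hx)) p
    ⟨hle p ⟨⟨⟨γ, hγ.symm⟩, ⟨β, hβ.symm⟩⟩, hα⟩, hα⟩
  exact ⟨τ, hτ, hdΔτ.symm⟩
end

section
/- (Proposition 1.4, abstract form.) Assume: (1) V^k = 0 for all k > N (for some fixed natural number N); (2) Condition (ii): the quotient chain map (V, Δ) → (V/Im d, Δ) induces an isomorphism on Δ-cohomology; (3) Condition (iii): for every k and every α ∈ V^k with dα = 0 there exist α₀ ∈ V^k and τ ∈ V^{k−1} with α = α₀ + dτ, dα₀ = 0 and Δα₀ = 0. Then in every degree, Im(d∘Δ) = Im d ∩ Ker Δ = Im Δ ∩ Ker d. -/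
/-- Proposition 1.4, abstract form: Let `V = ⊕ₖ V^k` be a
ℤ-graded complex vector space with `d` of degree `+1`, `Δ` of degree `-1`,
`d∘d = 0`, `Δ∘Δ = 0` and `d∘Δ + Δ∘d = 0`.  Assume
(1) `V^k = 0` for all `k > N`;
(2) Condition (ii): the quotient chain map `(V, Δ) → (V/Im d, Δ)` induces an
    isomorphism on `Δ`-cohomology (stated elementwise as injectivity and
    surjectivity of the induced map);
(3) Condition (iii): every `d`-closed element of `V^k` is, up to a `d`-exact
    term, both `d`- and `Δ`-closed.
Then in every degree `Im (d∘Δ) = Im d ∩ Ker Δ = Im Δ ∩ Ker d`. -/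
theorem im_dDelta_eq_imd_inf_kerDelta_eq_imDelta_inf_kerd
    {V : Type*} [AddCommGroup V] [Module ℂ V]
    (𝒱 : ℤ → Submodule ℂ V)
    (hinternal : DirectSum.IsInternal 𝒱)
    (d Δ : V →ₗ[ℂ] V)
    (hd : ∀ (k : ℤ), ∀ x ∈ 𝒱 k, d x ∈ 𝒱 (k + 1))
    (hΔ : ∀ (k : ℤ), ∀ x ∈ 𝒱 k, Δ x ∈ 𝒱 (k - 1))
    (hdd : d ∘ₗ d = 0)
    (hΔΔ : Δ ∘ₗ Δ = 0)
    (hdΔ : d ∘ₗ Δ + Δ ∘ₗ d = 0)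
    (N : ℕ)
    (hbound : ∀ k : ℤ, (N : ℤ) < k → 𝒱 k = ⊥)
    (hinj : ∀ x : V, Δ x = 0 → (∃ y z : V, x = Δ y + d z) → ∃ w : V, x = Δ w)
    (hsurj : ∀ x : V, (∃ z : V, Δ x = d z) →
      ∃ y w z : V, Δ y = 0 ∧ x = y + Δ w + d z)
    (hiii : ∀ (k : ℤ), ∀ α ∈ 𝒱 k, d α = 0 →
      ∃ α₀ ∈ 𝒱 k, ∃ τ ∈ 𝒱 (k - 1), α = α₀ + d τ ∧ d α₀ = 0 ∧ Δ α₀ = 0) :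
    ∀ k : ℤ,
      LinearMap.range (d ∘ₗ Δ) ⊓ 𝒱 k
          = LinearMap.range d ⊓ LinearMap.ker Δ ⊓ 𝒱 k ∧
      LinearMap.range (d ∘ₗ Δ) ⊓ 𝒱 k
          = LinearMap.range Δ ⊓ LinearMap.ker d ⊓ 𝒱 k := by
  classical
  have hdd' : ∀ x, d (d x) = 0 := fun x => DFunLike.congr_fun hdd x
  have hΔΔ' : ∀ x, Δ (Δ x) = 0 := fun x => DFunLike.congr_fun hΔΔ x
  have hanti : ∀ x, Δ (d x) = - d (Δ x) := fun x =>
    eq_neg_of_add_eq_zero_right (DFunLike.congr_fun hdΔ x)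
  -- Step A : Im d ∩ Ker Δ ⊆ Im (d ∘ Δ)
  have hA : ∀ x : V, x ∈ LinearMap.range d → Δ x = 0 →
      x ∈ LinearMap.range (d ∘ₗ Δ) := by
    intro x hxd hxΔ
    obtain ⟨z, hz⟩ := hxd
    obtain ⟨w, hw⟩ := hinj x hxΔ ⟨0, z, by rw [map_zero, zero_add, hz]⟩
    obtain ⟨y, v, z', hy, hwdec⟩ := hsurj w ⟨z, by rw [← hw, hz]⟩
    refine ⟨-z', ?_⟩
    have : x = Δ (y + Δ v + d z') := by rw [← hwdec, hw]
    rw [map_add, map_add, hy, hΔΔ' v, hanti z'] at this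
    simp only [LinearMap.comp_apply, map_neg]
    rw [this]; abel
  -- Step B (graded) : d-closed graded elements have Δ-image in Im (d ∘ Δ)
  have hBgr : ∀ (k : ℤ), ∀ x ∈ 𝒱 k, d x = 0 → Δ x ∈ LinearMap.range (d ∘ₗ Δ) := by
    intro k x hxk hdx
    obtain ⟨α₀, -, τ, -, hdec, -, hΔα₀⟩ := hiii k x hxk hdx
    refine ⟨-τ, ?_⟩
    simp only [LinearMap.comp_apply, map_neg]
    rw [hdec, map_add, hΔα₀, hanti τ]; abel
  -- decomposition instance
  letI : DirectSum.Decomposition 𝒱 := hinternal.chooseDecomposition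
  -- Step B (ungraded)
  have hB : ∀ x : V, d x = 0 → Δ x ∈ LinearMap.range (d ∘ₗ Δ) := by
    intro x hdx
    have hxsum := DirectSum.sum_support_decompose 𝒱 x
    set s := (DirectSum.decompose 𝒱 x).support with hs
    -- each component is d-closed
    have hcomp : ∀ j ∈ s, d ((DirectSum.decompose 𝒱 x j : V)) = 0 := by
      intro j hj
      have hkey : ∀ i : ℤ, (DirectSum.decompose 𝒱 (d x) (i + 1) : V)
          = d ((DirectSum.decompose 𝒱 x i : V)) := by
        intro i
        conv_lhs => rw [← hxsum]
        rw [map_sum, DirectSum.decompose_sum]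
        rw [DFinsupp.finset_sum_apply]
        rw [AddSubmonoidClass.coe_finset_sum]
        rw [Finset.sum_eq_single i]
        · exact DirectSum.decompose_of_mem_same 𝒱
            (hd i _ (DirectSum.decompose 𝒱 x i).2)
        · intro b hb hbi
          exact DirectSum.decompose_of_mem_ne 𝒱
            (hd b _ (DirectSum.decompose 𝒱 x b).2) (by omega)
        · intro hi
          have : (DirectSum.decompose 𝒱 x i : V) = 0 := by
            simpa [hs] using DFinsupp.notMem_support_iff.mp (by simpa [hs] using hi)
          rw [this]; simp
      have := hkey j
      rw [hdx] at this
      simpa using this.symm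
    have : Δ x = ∑ j ∈ s, Δ ((DirectSum.decompose 𝒱 x j : V)) := by
      rw [← map_sum, hxsum]
    rw [this]
    exact Submodule.sum_mem _ fun j hj =>
      hBgr j _ (DirectSum.decompose 𝒱 x j).2 (hcomp j hj)
  -- Step C : Im Δ ∩ Ker d ⊆ Im (d ∘ Δ)
  have hC : ∀ x : V, x ∈ LinearMap.range Δ → d x = 0 →
      x ∈ LinearMap.range (d ∘ₗ Δ) := by
    intro x hxΔ hdx
    obtain ⟨β, hβ⟩ := hxΔ
    have hdβ : d β ∈ LinearMap.range (d ∘ₗ Δ) := by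
      refine hA _ ⟨β, rfl⟩ ?_
      rw [hanti β, hβ, hdx, neg_zero]
    obtain ⟨ρ, hρ⟩ := hdβ
    have hβ' : d (β - Δ ρ) = 0 := by
      rw [map_sub, ← hρ]; simp
    have := hB (β - Δ ρ) hβ'
    rw [map_sub, hΔΔ' ρ, sub_zero, hβ] at this
    exact this
  -- trivial inclusions
  have h1 : LinearMap.range (d ∘ₗ Δ) = LinearMap.range d ⊓ LinearMap.ker Δ := by
    apply le_antisymm
    · rintro x ⟨y, rfl⟩
      refine ⟨⟨Δ y, rfl⟩, ?_⟩
      have h0 : Δ ((d ∘ₗ Δ) y) = 0 := by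
        simp only [LinearMap.comp_apply]
        rw [hanti (Δ y), hΔΔ' y, map_zero, neg_zero]
      simpa using h0
    · rintro x ⟨⟨y, rfl⟩, hx⟩
      exact hA _ ⟨y, rfl⟩ hx
  have h2 : LinearMap.range (d ∘ₗ Δ) = LinearMap.range Δ ⊓ LinearMap.ker d := by
    apply le_antisymm
    · rintro x ⟨y, rfl⟩
      constructor
      · refine ⟨- d y, ?_⟩
        rw [map_neg, hanti y]; simp
      · have h0 : d ((d ∘ₗ Δ) y) = 0 := hdd' (Δ y)
        simpa using h0
    · rintro x ⟨hx1, hx2⟩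
      exact hC x hx1 hx2
  intro k
  exact ⟨by rw [h1], by rw [h2]⟩
end

section
/- Assume the dΔ-equalities: in every degree, Im(d∘Δ) = Im d ∩ Ker Δ = Im Δ ∩ Ker d. Then Ker Δ is a d-subcomplex of V (d(Ker Δ) ⊆ Ker Δ), and the natural inclusion of complexes (Ker Δ, d) → (V, d) is a quasi-isomorphism: it induces an isomorphism (Ker Δ ∩ Ker d)/(d(Ker Δ)) ≅ Ker d / Im d in every degree. -/
set_option synthInstance.maxHeartbeats 400000 in
lemma component_exists {V : Type*} [AddCommGroup V] [Module ℂ V]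
    (𝒱 : ℤ → Submodule ℂ V) (hinternal : DirectSum.IsInternal 𝒱)
    (T : V →ₗ[ℂ] V) (hT : ∀ j : ℤ, ∀ x ∈ 𝒱 j, T x ∈ 𝒱 j)
    (m : ℤ) (y : V) (hy : y ∈ 𝒱 m) (x : V) (hx : T x = y) :
    ∃ η ∈ 𝒱 m, T η = y := by
  obtain ⟨xt, hxt⟩ := hinternal.surjective x
  let g : ∀ j : ℤ, 𝒱 j →ₗ[ℂ] 𝒱 j := fun j => T.restrict (fun v hv => hT j v hv)
  let F : DirectSum ℤ (fun j => 𝒱 j) →ₗ[ℂ] DirectSum ℤ (fun j => 𝒱 j) := DFinsupp.mapRange.linearMap g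
  have hcomm : ∀ z : DirectSum ℤ (fun j => 𝒱 j),
      DirectSum.coeAddMonoidHom 𝒱 (F z) = T (DirectSum.coeAddMonoidHom 𝒱 z) := by
    intro z
    induction z using DirectSum.induction_on with
    | zero => simp
    | of j v =>
      have h1 : F (DirectSum.of (fun j => 𝒱 j) j v) = DirectSum.of (fun j => 𝒱 j) j (g j v) := by
        show DFinsupp.mapRange (fun i x => g i x) (fun i => (g i).map_zero)
            (DFinsupp.single j v) = DFinsupp.single j (g j v)
        exact DFinsupp.mapRange_single
      rw [h1, DirectSum.coeAddMonoidHom_of, DirectSum.coeAddMonoidHom_of]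
      rfl
    | add a b ha hb => simp [map_add, ha, hb]
  have h1 : DirectSum.coeAddMonoidHom 𝒱 (F xt) = y := by rw [hcomm, hxt, hx]
  have h2 : DirectSum.coeAddMonoidHom 𝒱 (DirectSum.of (fun j => 𝒱 j) m ⟨y, hy⟩) = y := by
    rw [DirectSum.coeAddMonoidHom_of]
  have h3 := hinternal.injective (h1.trans h2.symm)
  refine ⟨(xt m : V), (xt m).2, ?_⟩
  have h4 := DFunLike.congr_fun h3 m
  have h5 : F xt m = g m (xt m) := rfl
  rw [h5, DirectSum.of_eq_same] at h4
  exact congrArg Subtype.val h4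


/-- Let `V = ⊕ₖ V^k` be a ℤ-graded complex vector space with
`d` of degree `+1`, `Δ` of degree `-1`, `d∘d = 0`, `Δ∘Δ = 0` and
`d∘Δ + Δ∘d = 0`.  Assume the `dΔ`-equalities: in every degree,
`Im (d∘Δ) = Im d ∩ Ker Δ = Im Δ ∩ Ker d`.
Then `Ker Δ` is a `d`-subcomplex of `V`, and the inclusion
`(Ker Δ, d) → (V, d)` is a quasi-isomorphism; the induced map
`(Ker Δ ∩ Ker d)/(d (Ker Δ)) → Ker d / Im d` is stated elementwise to be
injective and surjective in every degree. -/
theorem kerDelta_inclusion_quasiIso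
    {V : Type*} [AddCommGroup V] [Module ℂ V]
    (𝒱 : ℤ → Submodule ℂ V)
    (hinternal : DirectSum.IsInternal 𝒱)
    (d Δ : V →ₗ[ℂ] V)
    (hd : ∀ (k : ℤ), ∀ x ∈ 𝒱 k, d x ∈ 𝒱 (k + 1))
    (hΔ : ∀ (k : ℤ), ∀ x ∈ 𝒱 k, Δ x ∈ 𝒱 (k - 1))
    (hdd : d ∘ₗ d = 0)
    (hΔΔ : Δ ∘ₗ Δ = 0)
    (hdΔ : d ∘ₗ Δ + Δ ∘ₗ d = 0)
    (heq : ∀ k : ℤ,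
      LinearMap.range (d ∘ₗ Δ) ⊓ 𝒱 k
        = LinearMap.range d ⊓ LinearMap.ker Δ ⊓ 𝒱 k)
    (heq' : ∀ k : ℤ,
      LinearMap.range (d ∘ₗ Δ) ⊓ 𝒱 k
        = LinearMap.range Δ ⊓ LinearMap.ker d ⊓ 𝒱 k) :
    -- `Ker Δ` is a `d`-subcomplex
    (∀ x : V, Δ x = 0 → Δ (d x) = 0) ∧
    -- the inclusion induces an isomorphism on cohomology in every degree:
    (∀ k : ℤ,
      -- injectivity: a class of the subcomplex dying in `Ker d / Im d`
      -- is already trivial in `(Ker Δ ∩ Ker d)/(d (Ker Δ))`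
      (∀ α ∈ 𝒱 k, Δ α = 0 → d α = 0 → (∃ γ : V, α = d γ) →
        ∃ γ : V, Δ γ = 0 ∧ α = d γ) ∧
      -- surjectivity: every `d`-cohomology class has a `Δ`-closed
      -- representative
      (∀ α ∈ 𝒱 k, d α = 0 →
        ∃ β ∈ 𝒱 k, Δ β = 0 ∧ d β = 0 ∧ ∃ γ : V, α - β = d γ)) := by
  have hanti : ∀ x : V, d (Δ x) + Δ (d x) = 0 := fun x => by
    have := LinearMap.congr_fun hdΔ x
    simpa using this
  constructor
  · intro x hx
    have := hanti x
    rw [hx, map_zero, zero_add] at this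
    exact this
  intro k
  constructor
  · -- injectivity
    intro α hα hΔα hdα ⟨γ, hγ⟩
    have hmem : α ∈ LinearMap.range (d ∘ₗ Δ) ⊓ 𝒱 k := by
      rw [heq k]
      exact ⟨⟨⟨γ, hγ.symm⟩, hΔα⟩, hα⟩
    obtain ⟨β, hβ⟩ := hmem.1
    refine ⟨Δ β, ?_, ?_⟩
    · have := LinearMap.congr_fun hΔΔ β
      simpa using this
    · simpa using hβ.symm
  · -- surjectivity
    intro α hα hdα
    have hΔαmem : Δ α ∈ LinearMap.range (d ∘ₗ Δ) ⊓ 𝒱 (k - 1) := by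
      rw [heq' (k - 1)]
      refine ⟨⟨⟨α, rfl⟩, ?_⟩, hΔ k α hα⟩
      have := hanti α
      rw [hdα, map_zero, add_zero] at this
      exact this
    obtain ⟨⟨ρ, hρ⟩, hΔα1⟩ := hΔαmem
    -- graded component extraction for the degree-0 operator d∘Δ
    have hT : ∀ j : ℤ, ∀ x ∈ 𝒱 j, (d ∘ₗ Δ) x ∈ 𝒱 j := by
      intro j x hx
      have := hd (j - 1) (Δ x) (hΔ j x hx)
      simpa using this
    obtain ⟨η, hηmem, hη⟩ := component_exists 𝒱 hinternal (d ∘ₗ Δ) hT (k - 1) (Δ α) hΔα1 ρ hρ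
    have hdΔη : d (Δ η) = Δ α := by simpa using hη
    refine ⟨α + d η, ?_, ?_, ?_, ⟨-η, ?_⟩⟩
    · have h2 : d η ∈ 𝒱 (k - 1 + 1) := hd _ _ hηmem
      have hk : (k - 1 + 1 : ℤ) = k := by ring
      rw [hk] at h2
      exact Submodule.add_mem _ hα h2
    · have h3 := hanti η
      rw [map_add]
      rw [hdΔη] at h3
      exact h3
    · have h4 := LinearMap.congr_fun hdd η
      rw [map_add, hdα]
      simpa using h4
    · rw [map_neg]
      abel
end

section
/- Assume the dΔ-equalities: in every degree, Im(d∘Δ) = Im d ∩ Ker Δ = Im Δ ∩ Ker d. Then d maps Ker Δ into Im Δ, so the natural projection Ker Δ → Ker Δ/Im Δ = H(V, Δ) is a chain map from (Ker Δ, d) to the Δ-cohomology equipped with the zero differential; moreover this projection is a quasi-isomorphism: it induces an isomorphism (Ker Δ ∩ Ker d)/(d(Ker Δ)) ≅ Ker Δ/Im Δ in every degree. -/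
/-!
Because `d` and `Δ` anticommute, `d Δ w = Δ (-d w)`, so `Im (d∘Δ) ⊆ Im Δ`. For a homogeneous
`Δ`-closed `x`, `d x` lies in `Im d ∩ Ker Δ = Im (d∘Δ)`, hence in `Im Δ`; since `Ker Δ` is a graded
subspace this extends to all of `Ker Δ`. Injectivity is `Im Δ ∩ Ker d = Im (d∘Δ)` read with the
`Δ`-closed primitive `Δ w`. For surjectivity, `d α = d Δ γ` with `γ` homogeneous (take a graded
component), and `α - Δ γ` is the required `d`- and `Δ`-closed representative.
-/

open DirectSum LinearMap

section GradedMaps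

variable {ι κ R V W : Type*} [DecidableEq ι] [DecidableEq κ] [Semiring R]
  [AddCommMonoid V] [Module R V] [AddCommMonoid W] [Module R W]
  {𝒱 : ι → Submodule R V} {𝒲 : κ → Submodule R W} [Decomposition 𝒱] [Decomposition 𝒲]
  {f : V →ₗ[R] W} {g : ι → κ}

theorem decompose_map_of_mapsTo (hg : g.Injective) (hf : ∀ i, ∀ x ∈ 𝒱 i, f x ∈ 𝒲 (g i))
    (x : V) (i : ι) : (decompose 𝒲 (f x) (g i) : W) = f (decompose 𝒱 x i) := by
  induction x using Decomposition.inductionOn 𝒱 with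
  | zero => simp
  | @homogeneous j y =>
    by_cases hji : j = i
    · subst hji
      rw [decompose_of_mem_same 𝒲 (hf j y y.2), decompose_of_mem_same 𝒱 y.2]
    · rw [decompose_of_mem_ne 𝒲 (hf j y y.2) (hg.ne hji), decompose_of_mem_ne 𝒱 y.2 hji,
        map_zero]
  | add x y hx hy => simp [hx, hy]

theorem isHomogeneous_ker_of_mapsTo (hg : g.Injective) (hf : ∀ i, ∀ x ∈ 𝒱 i, f x ∈ 𝒲 (g i)) :
    SetLike.IsHomogeneous 𝒱 (ker f) := fun i x hx => by
  rw [mem_ker, ← decompose_map_of_mapsTo hg hf, mem_ker.mp hx, decompose_zero, DirectSum.zero_apply,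
    ZeroMemClass.coe_zero]

theorem exists_mem_eq_of_mem_range_of_mapsTo (hg : g.Injective)
    (hf : ∀ i, ∀ x ∈ 𝒱 i, f x ∈ 𝒲 (g i)) {i : ι} {y : W} (hy : y ∈ 𝒲 (g i))
    (hyf : y ∈ range f) : ∃ x ∈ 𝒱 i, f x = y := by
  obtain ⟨z, rfl⟩ := hyf
  exact ⟨decompose 𝒱 z i, (decompose 𝒱 z i).2,
    (decompose_map_of_mapsTo hg hf z i).symm.trans (decompose_of_mem_same 𝒲 hy)⟩

omit [DecidableEq κ] [Decomposition 𝒲] in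
theorem map_mem_of_isHomogeneous {p : Submodule R V} (hp : SetLike.IsHomogeneous 𝒱 p)
    {q : Submodule R W} (h : ∀ i, ∀ x ∈ 𝒱 i, x ∈ p → f x ∈ q) {x : V} (hx : x ∈ p) :
    f x ∈ q := by
  classical
  rw [← sum_support_decompose 𝒱 x, map_sum]
  exact sum_mem fun i _ => h i _ (decompose 𝒱 x i).2 (hp i hx)

end GradedMaps

section Anticommuting

variable {R V : Type*} [Semiring R] [AddCommGroup V] [Module R V] {d Δ : V →ₗ[R] V}

theorem apply_apply_eq_neg_of_anticomm (hdΔ : d ∘ₗ Δ + Δ ∘ₗ d = 0) (x : V) :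
    Δ (d x) = -d (Δ x) :=
  eq_neg_of_add_eq_zero_right (by simpa using LinearMap.congr_fun hdΔ x)

theorem range_comp_le_range_of_anticomm (hdΔ : d ∘ₗ Δ + Δ ∘ₗ d = 0) :
    range (d ∘ₗ Δ) ≤ range Δ := by
  rintro _ ⟨w, rfl⟩
  exact ⟨-d w, by simp [apply_apply_eq_neg_of_anticomm hdΔ]⟩

theorem mem_range_comp_of_mem_ker (hdΔ : d ∘ₗ Δ + Δ ∘ₗ d = 0) {p : Submodule R V}
    (hp : range (d ∘ₗ Δ) ⊓ p = range d ⊓ ker Δ ⊓ p) {x : V} (hx : Δ x = 0) (hdx : d x ∈ p) :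
    d x ∈ range (d ∘ₗ Δ) := by
  have hker : d x ∈ ker Δ := by simp [apply_apply_eq_neg_of_anticomm hdΔ, hx]
  have : d x ∈ range d ⊓ ker Δ ⊓ p := ⟨⟨mem_range_self d x, hker⟩, hdx⟩
  exact (hp ▸ this).1

end Anticommuting

theorem kerDelta_projection_quasiIso_general
    {V : Type*} [AddCommGroup V] [Module ℂ V]
    (𝒱 : ℤ → Submodule ℂ V)
    (hinternal : DirectSum.IsInternal 𝒱)
    (d Δ : V →ₗ[ℂ] V)
    (hd : ∀ (k : ℤ), ∀ x ∈ 𝒱 k, d x ∈ 𝒱 (k + 1))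
    (hΔ : ∀ (k : ℤ), ∀ x ∈ 𝒱 k, Δ x ∈ 𝒱 (k - 1))
    (hΔΔ : Δ ∘ₗ Δ = 0)
    (hdΔ : d ∘ₗ Δ + Δ ∘ₗ d = 0)
    (heq : ∀ k : ℤ,
      LinearMap.range (d ∘ₗ Δ) ⊓ 𝒱 k
        = LinearMap.range d ⊓ LinearMap.ker Δ ⊓ 𝒱 k)
    (heq' : ∀ k : ℤ,
      LinearMap.range (d ∘ₗ Δ) ⊓ 𝒱 k
        = LinearMap.range Δ ⊓ LinearMap.ker d ⊓ 𝒱 k) :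
    -- `d` maps `Ker Δ` into `Im Δ`: the projection is a chain map to
    -- `(H(V, Δ), 0)`
    (∀ x : V, Δ x = 0 → ∃ y : V, d x = Δ y) ∧
    -- it induces an isomorphism
    -- `(Ker Δ ∩ Ker d)/(d (Ker Δ)) ≅ Ker Δ / Im Δ` in every degree:
    (∀ k : ℤ,
      -- injectivity: a `d`- and `Δ`-closed element which is `Δ`-exact is
      -- `d`-exact with a `Δ`-closed primitive
      (∀ α ∈ 𝒱 k, Δ α = 0 → d α = 0 → (∃ β : V, α = Δ β) →
        ∃ γ : V, Δ γ = 0 ∧ α = d γ) ∧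
      -- surjectivity: every `Δ`-cohomology class has a representative
      -- killed by both `d` and `Δ`
      (∀ α ∈ 𝒱 k, Δ α = 0 →
        ∃ β ∈ 𝒱 k, Δ β = 0 ∧ d β = 0 ∧ ∃ γ : V, α - β = Δ γ)) := by
  let := hinternal.chooseDecomposition
  have hΔΔ' (x : V) : Δ (Δ x) = 0 := by simpa using LinearMap.congr_fun hΔΔ x
  have hdΔ_mapsTo (k : ℤ) (x : V) (hx : x ∈ 𝒱 k) : (d ∘ₗ Δ) x ∈ 𝒱 k := by
    simpa using hd _ _ (hΔ k x hx)
  have d_mem_range (k : ℤ) (x : V) (hx : x ∈ 𝒱 k) (hΔx : Δ x = 0) : d x ∈ range (d ∘ₗ Δ) :=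
    mem_range_comp_of_mem_ker hdΔ (heq (k + 1)) hΔx (hd k x hx)
  refine ⟨fun x hx => ?chain, fun k => ⟨fun α hα _ hdα ⟨β, hβ⟩ => ?inj, fun α hα hΔα => ?surj⟩⟩
  case chain =>
    have hker : SetLike.IsHomogeneous 𝒱 (ker Δ) :=
      isHomogeneous_ker_of_mapsTo (sub_left_injective (b := 1)) hΔ
    obtain ⟨y, hy⟩ := map_mem_of_isHomogeneous hker
      (fun k x hx hΔx => range_comp_le_range_of_anticomm hdΔ (d_mem_range k x hx hΔx)) hx
    exact ⟨y, hy.symm⟩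
  case inj =>
    obtain ⟨⟨γ, hγ⟩, -⟩ : α ∈ range (d ∘ₗ Δ) ⊓ 𝒱 k := heq' k ▸ ⟨⟨⟨β, hβ.symm⟩, hdα⟩, hα⟩
    exact ⟨Δ γ, hΔΔ' γ, hγ.symm⟩
  case surj =>
    obtain ⟨γ, hγ, hdΔγ⟩ := exists_mem_eq_of_mem_range_of_mapsTo (g := id) Function.injective_id
      hdΔ_mapsTo (hd k α hα) (d_mem_range k α hα hΔα)
    refine ⟨α - Δ γ, sub_mem hα (by simpa using hΔ _ γ hγ), ?_, ?_, γ, by abel⟩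
    · simp [hΔα, hΔΔ']
    · simpa [sub_eq_zero] using hdΔγ.symm

/-- Let `V = ⊕ₖ V^k` be a ℤ-graded complex vector space with
`d` of degree `+1`, `Δ` of degree `-1`, `d∘d = 0`, `Δ∘Δ = 0` and
`d∘Δ + Δ∘d = 0`.  Assume the `dΔ`-equalities: in every degree,
`Im (d∘Δ) = Im d ∩ Ker Δ = Im Δ ∩ Ker d`.
Then `d` maps `Ker Δ` into `Im Δ`, so the projection
`Ker Δ → Ker Δ / Im Δ = H(V, Δ)` is a chain map from `(Ker Δ, d)` to the
`Δ`-cohomology with zero differential; moreover it is a quasi-isomorphism: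
the induced map `(Ker Δ ∩ Ker d)/(d (Ker Δ)) → Ker Δ / Im Δ` is stated
elementwise to be injective and surjective in every degree. -/
theorem kerDelta_projection_quasiIso
    {V : Type*} [AddCommGroup V] [Module ℂ V]
    (𝒱 : ℤ → Submodule ℂ V)
    (hinternal : DirectSum.IsInternal 𝒱)
    (d Δ : V →ₗ[ℂ] V)
    (hd : ∀ (k : ℤ), ∀ x ∈ 𝒱 k, d x ∈ 𝒱 (k + 1))
    (hΔ : ∀ (k : ℤ), ∀ x ∈ 𝒱 k, Δ x ∈ 𝒱 (k - 1))
    (hdd : d ∘ₗ d = 0)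
    (hΔΔ : Δ ∘ₗ Δ = 0)
    (hdΔ : d ∘ₗ Δ + Δ ∘ₗ d = 0)
    (heq : ∀ k : ℤ,
      LinearMap.range (d ∘ₗ Δ) ⊓ 𝒱 k
        = LinearMap.range d ⊓ LinearMap.ker Δ ⊓ 𝒱 k)
    (heq' : ∀ k : ℤ,
      LinearMap.range (d ∘ₗ Δ) ⊓ 𝒱 k
        = LinearMap.range Δ ⊓ LinearMap.ker d ⊓ 𝒱 k) :
    -- `d` maps `Ker Δ` into `Im Δ`: the projection is a chain map to
    -- `(H(V, Δ), 0)`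
    (∀ x : V, Δ x = 0 → ∃ y : V, d x = Δ y) ∧
    -- it induces an isomorphism
    -- `(Ker Δ ∩ Ker d)/(d (Ker Δ)) ≅ Ker Δ / Im Δ` in every degree:
    (∀ k : ℤ,
      -- injectivity: a `d`- and `Δ`-closed element which is `Δ`-exact is
      -- `d`-exact with a `Δ`-closed primitive
      (∀ α ∈ 𝒱 k, Δ α = 0 → d α = 0 → (∃ β : V, α = Δ β) →
        ∃ γ : V, Δ γ = 0 ∧ α = d γ) ∧
      -- surjectivity: every `Δ`-cohomology class has a representative
      -- killed by both `d` and `Δ`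
      (∀ α ∈ 𝒱 k, Δ α = 0 →
        ∃ β ∈ 𝒱 k, Δ β = 0 ∧ d β = 0 ∧ ∃ γ : V, α - β = Δ γ)) :=
  kerDelta_projection_quasiIso_general 𝒱 hinternal d Δ hd hΔ hΔΔ hdΔ heq heq'
end

section
/- Assume the dΔ-equalities: in every degree, Im(d∘Δ) = Im d ∩ Ker Δ = Im Δ ∩ Ker d. Then in every degree the d-cohomology and the Δ-cohomology of V are isomorphic: (Ker d ∩ V^k)/(Im d ∩ V^k) ≅ (Ker Δ ∩ V^k)/(Im Δ ∩ V^k), via the correspondence sending the class of an element of Ker d ∩ Ker Δ in d-cohomology to its class in Δ-cohomology (every class on either side has such a common representative, and the correspondence is well defined and bijective). -/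
/-!
Because `d` and `Δ` anticommute, `dΔ = -Δd` has degree zero, so by the `dΔ`-equalities a
homogeneous element of `Im d ∩ Ker Δ` is `dΔ y`, and one of `Im Δ ∩ Ker d` is `Δd y`, with `y`
homogeneous of the same degree. For `Δ`-closed `α`, `dα` lies in `Im d ∩ Ker Δ`; writing
`dα = dΔ y`, the element `α - Δ y` is closed for both operators, and symmetrically for `d`-closed
`α`. A difference of two common representatives lying in `Im d` lies in `Im dΔ = Im Δd ⊆ Im Δ`,
and vice versa.
-/

open DirectSum LinearMap

section Graded

variable {ι R M N : Type*} [DecidableEq ι] [Semiring R] [AddCommMonoid M] [Module R M]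
  [AddCommMonoid N] [Module R N] {ℳ : ι → Submodule R M} {𝒩 : ι → Submodule R N}
  {L : M →ₗ[R] N}

theorem DirectSum.coe_decompose_map_of_forall_mem [Decomposition ℳ] [Decomposition 𝒩]
    (hL : ∀ i, ∀ x ∈ ℳ i, L x ∈ 𝒩 i) (x : M) (m : ι) :
    (decompose 𝒩 (L x) m : N) = L (decompose ℳ x m) := by
  induction x using Decomposition.inductionOn ℳ with
  | zero => simp
  | @homogeneous i x =>
    by_cases hi : i = m
    · subst hi
      rw [decompose_of_mem_same 𝒩 (hL i x x.2), decompose_of_mem_same ℳ x.2]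
    · rw [decompose_of_mem_ne 𝒩 (hL i x x.2) hi, decompose_of_mem_ne ℳ x.2 hi, map_zero]
  | add x y hx hy => simp only [map_add, decompose_add, add_apply, Submodule.coe_add, hx, hy]

theorem DirectSum.IsInternal.range_inf_eq_map (hℳ : IsInternal ℳ) (h𝒩 : IsInternal 𝒩)
    (hL : ∀ i, ∀ x ∈ ℳ i, L x ∈ 𝒩 i) (m : ι) :
    range L ⊓ 𝒩 m = (ℳ m).map L := by
  let := hℳ.chooseDecomposition
  let := h𝒩.chooseDecomposition
  refine le_antisymm ?_ (le_inf map_le_range fun _ ⟨x, hx, hLx⟩ ↦ hLx ▸ hL m x hx)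
  rintro _ ⟨⟨x, rfl⟩, hLx⟩
  refine ⟨decompose ℳ x m, SetLike.coe_mem _, ?_⟩
  rw [← coe_decompose_map_of_forall_mem hL, decompose_of_mem_same 𝒩 hLx]

end Graded

section Anticommuting

variable {R V : Type*} [Ring R] [AddCommGroup V] [Module R V] {D E : V →ₗ[R] V}

theorem range_comp_le_range_of_comp_add_comp_eq_zero (hDE : D ∘ₗ E + E ∘ₗ D = 0) :
    range (D ∘ₗ E) ≤ range E := by
  rw [eq_neg_of_add_eq_zero_left hDE, ← comp_neg]
  exact range_comp_le_range (-D) E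

theorem exists_common_representative {W W' : Submodule R V}
    (hD : ∀ x ∈ W, D x ∈ W') (hE : ∀ x ∈ W', E x ∈ W)
    (hEE : E ∘ₗ E = 0) (hDE : D ∘ₗ E + E ∘ₗ D = 0)
    (hexact : range D ⊓ ker E ⊓ W' ≤ W'.map (D ∘ₗ E))
    {α : V} (hα : α ∈ W) (hEα : E α = 0) :
    ∃ β ∈ W, D β = 0 ∧ E β = 0 ∧ ∃ γ, α - β = E γ := by
  have hEDα : E (D α) = 0 := by
    simpa [hEα] using congr($hDE α)
  obtain ⟨y, hy, hDEy⟩ := hexact ⟨⟨mem_range_self D α, hEDα⟩, hD α hα⟩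
  refine ⟨α - E y, W.sub_mem hα (hE y hy), ?_, ?_, y, sub_sub_cancel α (E y)⟩
  · rw [map_sub, ← comp_apply, hDEy, sub_self]
  · rw [map_sub, hEα, ← comp_apply, hEE, LinearMap.zero_apply, sub_zero]

theorem mem_range_of_mem_range_of_mem_ker {W : Submodule R V}
    (hDE : D ∘ₗ E + E ∘ₗ D = 0) (hexact : range D ⊓ ker E ⊓ W ≤ W.map (D ∘ₗ E))
    {z : V} (hz : z ∈ W) (hEz : E z = 0) (hzD : z ∈ range D) : z ∈ range E :=
  range_comp_le_range_of_comp_add_comp_eq_zero hDE (map_le_range (hexact ⟨⟨hzD, hEz⟩, hz⟩))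

end Anticommuting

/-- Let `V = ⊕ₖ V^k` be a ℤ-graded complex vector space with
`d` of degree `+1`, `Δ` of degree `-1`, `d∘d = 0`, `Δ∘Δ = 0` and
`d∘Δ + Δ∘d = 0`.  Assume the `dΔ`-equalities: in every degree,
`Im (d∘Δ) = Im d ∩ Ker Δ = Im Δ ∩ Ker d`.
Then in every degree the `d`-cohomology and the `Δ`-cohomology of `V` are
isomorphic via common representatives in `Ker d ∩ Ker Δ`: every class on
either side has such a representative, and for two common representatives
being `d`-cohomologous is equivalent to being `Δ`-cohomologous (so the
correspondence is well defined and bijective). -/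
theorem d_cohomology_iso_Delta_cohomology
    {V : Type*} [AddCommGroup V] [Module ℂ V]
    (𝒱 : ℤ → Submodule ℂ V)
    (hinternal : DirectSum.IsInternal 𝒱)
    (d Δ : V →ₗ[ℂ] V)
    (hd : ∀ (k : ℤ), ∀ x ∈ 𝒱 k, d x ∈ 𝒱 (k + 1))
    (hΔ : ∀ (k : ℤ), ∀ x ∈ 𝒱 k, Δ x ∈ 𝒱 (k - 1))
    (hdd : d ∘ₗ d = 0)
    (hΔΔ : Δ ∘ₗ Δ = 0)
    (hdΔ : d ∘ₗ Δ + Δ ∘ₗ d = 0)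
    (heq : ∀ k : ℤ,
      LinearMap.range (d ∘ₗ Δ) ⊓ 𝒱 k
        = LinearMap.range d ⊓ LinearMap.ker Δ ⊓ 𝒱 k)
    (heq' : ∀ k : ℤ,
      LinearMap.range (d ∘ₗ Δ) ⊓ 𝒱 k
        = LinearMap.range Δ ⊓ LinearMap.ker d ⊓ 𝒱 k) :
    ∀ k : ℤ,
      -- every `d`-cohomology class in `V^k` has a common representative
      (∀ α ∈ 𝒱 k, d α = 0 →
        ∃ β ∈ 𝒱 k, d β = 0 ∧ Δ β = 0 ∧ ∃ γ : V, α - β = d γ) ∧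
      -- every `Δ`-cohomology class in `V^k` has a common representative
      (∀ α ∈ 𝒱 k, Δ α = 0 →
        ∃ β ∈ 𝒱 k, d β = 0 ∧ Δ β = 0 ∧ ∃ γ : V, α - β = Δ γ) ∧
      -- the correspondence is well defined and bijective: for common
      -- representatives, `d`-cohomologous ↔ `Δ`-cohomologous
      (∀ α ∈ 𝒱 k, ∀ β ∈ 𝒱 k,
        d α = 0 → Δ α = 0 → d β = 0 → Δ β = 0 →
        ((∃ γ : V, α - β = d γ) ↔ (∃ γ : V, α - β = Δ γ))) := by
  have hΔd : Δ ∘ₗ d + d ∘ₗ Δ = 0 := by rwa [add_comm]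
  have hΔ_of_succ (k : ℤ) (x : V) (hx : x ∈ 𝒱 (k + 1)) : Δ x ∈ 𝒱 k := by
    simpa using hΔ (k + 1) x hx
  have hd_of_pred (k : ℤ) (x : V) (hx : x ∈ 𝒱 (k - 1)) : d x ∈ 𝒱 k := by
    simpa using hd (k - 1) x hx
  have hexact_d (k : ℤ) : range d ⊓ ker Δ ⊓ 𝒱 k ≤ (𝒱 k).map (d ∘ₗ Δ) := by
    rw [← heq k, hinternal.range_inf_eq_map hinternal fun j x hx ↦ hd_of_pred j (Δ x) (hΔ j x hx)]
  have hexact_Δ (k : ℤ) : range Δ ⊓ ker d ⊓ 𝒱 k ≤ (𝒱 k).map (Δ ∘ₗ d) := by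
    rw [← heq' k, eq_neg_of_add_eq_zero_left hdΔ, range_neg,
      hinternal.range_inf_eq_map hinternal fun j x hx ↦ hΔ_of_succ j (d x) (hd j x hx)]
  intro k
  refine ⟨fun α hα hdα ↦ ?_, fun α hα hΔα ↦ exists_common_representative (hd k)
    (hΔ_of_succ k) hΔΔ hdΔ (hexact_d (k + 1)) hα hΔα, fun α hα β hβ hdα hΔα hdβ hΔβ ↦ ?_⟩
  · obtain ⟨β, hβ, hΔβ, hdβ, hγ⟩ :=
      exists_common_representative (hΔ k) (hd_of_pred k) hdd hΔd (hexact_Δ (k - 1)) hα hdα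
    exact ⟨β, hβ, hdβ, hΔβ, hγ⟩
  · have hαβ : α - β ∈ 𝒱 k := (𝒱 k).sub_mem hα hβ
    simp only [eq_comm (a := α - β), ← mem_range]
    exact ⟨mem_range_of_mem_range_of_mem_ker hdΔ (hexact_d k) hαβ (by simp [hΔα, hΔβ]),
      mem_range_of_mem_range_of_mem_ker hΔd (hexact_Δ k) hαβ (by simp [hdα, hdβ])⟩
end

section
/- (Theorem 1.5, abstract form.) Assume the dΔ-equalities: in every degree, Im(d∘Δ) = Im d ∩ Ker Δ = Im Δ ∩ Ker d. Then the complex (V, d) is formal, i.e., quasi-isomorphic to its cohomology: the subcomplex W := Ker Δ (with differential d) admits a chain map into (V, d) (the inclusion) and a chain map onto (H(V, d), 0) (the projection through Ker Δ/Im Δ composed with the isomorphism H(V, Δ) ≅ H(V, d)), and both chain maps induce isomorphisms on d-cohomology in every degree. -/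
open DirectSum in
lemma hodge_components {V : Type*} [AddCommGroup V] [Module ℂ V]
    (𝒱 : ℤ → Submodule ℂ V) (hinternal : DirectSum.IsInternal 𝒱)
    (g : V →ₗ[ℂ] V) (r : ℤ) (hg : ∀ j : ℤ, ∀ x ∈ 𝒱 j, g x ∈ 𝒱 (j + r)) (z : V) :
    ∃ (s : Finset ℤ) (c : ℤ → V), (∀ j, c j ∈ 𝒱 j) ∧ z = ∑ j ∈ s, c j ∧
      ∀ k : ℤ, g z ∈ 𝒱 k → g (c (k - r)) = g z ∧ ∀ j, j ≠ k - r → g (c j) = 0 := by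
  classical
  obtain ⟨hinj, hsurj⟩ := hinternal
  obtain ⟨w, hw⟩ := hsurj z
  have hzsum : z = ∑ j ∈ w.support, ((w j : V)) := by
    conv_lhs => rw [← hw, ← DirectSum.sum_support_of w]
    rw [map_sum]
    simp
  refine ⟨w.support, fun j => (w j : V), fun j => (w j).2, hzsum, ?_⟩
  intro k hk
  set w' : ⨁ j : ℤ, 𝒱 j :=
    ∑ j ∈ w.support, DirectSum.of (fun j : ℤ => 𝒱 j) (j + r)
      ⟨g (w j), hg j _ (w j).2⟩ with hw'def
  have hmap : DirectSum.coeAddMonoidHom 𝒱 w' = g z := by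
    rw [hw'def, map_sum]
    simp only [DirectSum.coeAddMonoidHom_of]
    rw [← map_sum, ← hzsum]
  have hweq : w' = DirectSum.of (fun j : ℤ => 𝒱 j) k ⟨g z, hk⟩ :=
    hinj (by rw [hmap, DirectSum.coeAddMonoidHom_of])
  have hcomp : ∀ m : ℤ, ((w' m : V)) = g ((w (m - r) : V)) := by
    intro m
    rw [hw'def]
    rw [DFinsupp.finset_sum_apply]
    rw [AddSubmonoidClass.coe_finset_sum]
    have hterm : ∀ j ∈ w.support,
        ((DirectSum.of (fun j : ℤ => 𝒱 j) (j + r) ⟨g (w j), hg j _ (w j).2⟩ m : V))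
          = if m - r = j then g (w j) else 0 := by
      intro j _
      rw [DirectSum.coe_of_apply]
      rcases eq_or_ne (m - r) j with h | h
      · rw [if_pos h, if_pos (by omega)]
      · rw [if_neg (by omega), if_neg h]; rfl
    rw [Finset.sum_congr rfl hterm, Finset.sum_ite_eq]
    by_cases hmem : m - r ∈ w.support
    · rw [if_pos hmem]
    · rw [if_neg hmem]
      rw [DFinsupp.notMem_support_iff] at hmem
      rw [hmem]
      simp
  constructor
  · have h1 := hcomp k
    rw [hweq, DirectSum.of_eq_same] at h1
    exact h1.symm
  · intro j hj
    have h2 := hcomp (j + r)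
    rw [hweq, DirectSum.of_eq_of_ne _ _ _ (by omega)] at h2
    have : j + r - r = j := by ring
    rw [this] at h2
    simpa using h2.symm



/-- Theorem 1.5, abstract form: Let `V = ⊕ₖ V^k` be a ℤ-graded
complex vector space with `d` of degree `+1`, `Δ` of degree `-1`,
`d∘d = 0`, `Δ∘Δ = 0` and `d∘Δ + Δ∘d = 0`.  Assume the `dΔ`-equalities: in
every degree, `Im (d∘Δ) = Im d ∩ Ker Δ = Im Δ ∩ Ker d`.  Then `(V, d)` is
formal: the subcomplex `W := Ker Δ` (which is `d`-stable) admits the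
inclusion chain map into `(V, d)` and a projection chain map onto
`(H(V, d), 0)` (through `Ker Δ / Im Δ ≅ H(V, d)`), and both chain maps
induce isomorphisms on `d`-cohomology in every degree; the induced
isomorphisms are stated elementwise, and the identification
`H(V, Δ) ≅ H(V, d)` by common representatives is included. -/
theorem deRham_complex_formal
    {V : Type*} [AddCommGroup V] [Module ℂ V]
    (𝒱 : ℤ → Submodule ℂ V)
    (hinternal : DirectSum.IsInternal 𝒱)
    (d Δ : V →ₗ[ℂ] V)
    (hd : ∀ (k : ℤ), ∀ x ∈ 𝒱 k, d x ∈ 𝒱 (k + 1))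
    (hΔ : ∀ (k : ℤ), ∀ x ∈ 𝒱 k, Δ x ∈ 𝒱 (k - 1))
    (hdd : d ∘ₗ d = 0)
    (hΔΔ : Δ ∘ₗ Δ = 0)
    (hdΔ : d ∘ₗ Δ + Δ ∘ₗ d = 0)
    (heq : ∀ k : ℤ,
      LinearMap.range (d ∘ₗ Δ) ⊓ 𝒱 k
        = LinearMap.range d ⊓ LinearMap.ker Δ ⊓ 𝒱 k)
    (heq' : ∀ k : ℤ,
      LinearMap.range (d ∘ₗ Δ) ⊓ 𝒱 k
        = LinearMap.range Δ ⊓ LinearMap.ker d ⊓ 𝒱 k) :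
    -- `W := Ker Δ` is a `d`-subcomplex, so the inclusion `(Ker Δ, d) → (V, d)`
    -- is a chain map
    (∀ x : V, Δ x = 0 → Δ (d x) = 0) ∧
    -- the inclusion is a quasi-isomorphism:
    (∀ k : ℤ,
      (∀ α ∈ 𝒱 k, Δ α = 0 → d α = 0 → (∃ γ : V, α = d γ) →
        ∃ γ : V, Δ γ = 0 ∧ α = d γ) ∧
      (∀ α ∈ 𝒱 k, d α = 0 →
        ∃ β ∈ 𝒱 k, Δ β = 0 ∧ d β = 0 ∧ ∃ γ : V, α - β = d γ)) ∧
    -- `d (Ker Δ) ⊆ Im Δ`: the projection `Ker Δ → Ker Δ / Im Δ` is a chain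
    -- map onto the cohomology with zero differential
    (∀ x : V, Δ x = 0 → ∃ y : V, d x = Δ y) ∧
    -- the projection is a quasi-isomorphism:
    (∀ k : ℤ,
      (∀ α ∈ 𝒱 k, Δ α = 0 → d α = 0 → (∃ β : V, α = Δ β) →
        ∃ γ : V, Δ γ = 0 ∧ α = d γ) ∧
      (∀ α ∈ 𝒱 k, Δ α = 0 →
        ∃ β ∈ 𝒱 k, Δ β = 0 ∧ d β = 0 ∧ ∃ γ : V, α - β = Δ γ)) ∧
    -- the identification `H(V, Δ) ≅ H(V, d)` via common representatives:
    (∀ k : ℤ, ∀ α ∈ 𝒱 k, ∀ β ∈ 𝒱 k,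
      d α = 0 → Δ α = 0 → d β = 0 → Δ β = 0 →
      ((∃ γ : V, α - β = d γ) ↔ (∃ γ : V, α - β = Δ γ))) := by
  -- basic consequences
  have hanti : ∀ x : V, d (Δ x) + Δ (d x) = 0 := by
    intro x
    have := LinearMap.congr_fun hdΔ x
    simpa using this
  have hdd' : ∀ x : V, d (d x) = 0 := fun x => LinearMap.congr_fun hdd x
  have hΔΔ' : ∀ x : V, Δ (Δ x) = 0 := fun x => LinearMap.congr_fun hΔΔ x
  have hΔd : ∀ x : V, Δ x = 0 → Δ (d x) = 0 := by
    intro x hx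
    have h := hanti x
    rw [hx, map_zero, zero_add] at h
    exact h
  have hdΔ0 : ∀ x : V, d x = 0 → d (Δ x) = 0 := by
    intro x hx
    have h := hanti x
    rw [hx, map_zero] at h
    simpa using h
  -- range (d ∘ Δ) ≤ range Δ and ≤ range d
  have hrΔ : LinearMap.range (d ∘ₗ Δ) ≤ LinearMap.range Δ := by
    rintro x ⟨y, rfl⟩
    refine ⟨-(d y), ?_⟩
    have h := hanti y
    simp only [map_neg, LinearMap.coe_comp, Function.comp_apply]
    exact neg_eq_of_add_eq_zero_left h
  have hrd : LinearMap.range (d ∘ₗ Δ) ≤ LinearMap.range d := by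
    rintro x ⟨y, rfl⟩
    exact ⟨Δ y, rfl⟩
  -- degree-0 homogeneity of d ∘ Δ
  have hgΔd : ∀ j : ℤ, ∀ x ∈ 𝒱 j, (d ∘ₗ Δ) x ∈ 𝒱 (j + 0) := by
    intro j x hx
    have h1 := hd (j - 1) _ (hΔ j x hx)
    have : j - 1 + 1 = j + 0 := by ring
    rw [this] at h1
    simpa using h1
  have hgΔ : ∀ j : ℤ, ∀ x ∈ 𝒱 j, Δ x ∈ 𝒱 (j + (-1)) := by
    intro j x hx
    have h1 := hΔ j x hx
    have : j - 1 = j + (-1) := by ring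
    rwa [this] at h1
  refine ⟨hΔd, ?_, ?_, ?_, ?_⟩
  · -- inclusion quasi-iso
    intro k
    constructor
    · rintro α hαk hΔα hdα ⟨γ, rfl⟩
      have hmem : d γ ∈ LinearMap.range (d ∘ₗ Δ) ⊓ 𝒱 k := by
        rw [heq k]
        exact ⟨⟨⟨γ, rfl⟩, hΔα⟩, hαk⟩
      obtain ⟨⟨y, hy⟩, -⟩ := hmem
      exact ⟨Δ y, hΔΔ' y, hy.symm⟩
    · intro α hαk hdα
      have hmem : Δ α ∈ LinearMap.range (d ∘ₗ Δ) ⊓ 𝒱 (k - 1) := by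
        rw [heq' (k - 1)]
        exact ⟨⟨⟨α, rfl⟩, by simpa [LinearMap.mem_ker] using hdΔ0 α hdα⟩, hΔ k α hαk⟩
      obtain ⟨⟨z, hz⟩, hmem'⟩ := hmem
      obtain ⟨s, c, hc, hsum, hprop⟩ := hodge_components 𝒱 hinternal (d ∘ₗ Δ) 0 hgΔd z
      have hgz : (d ∘ₗ Δ) z ∈ 𝒱 (k - 1) := by rw [hz]; exact hmem'
      obtain ⟨hρ, -⟩ := hprop (k - 1) hgz
      set ρ := c (k - 1 - 0) with hρdef
      have hρk : ρ ∈ 𝒱 (k - 1) := by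
        have := hc (k - 1 - 0)
        simpa [hρdef] using this
      have hρeq : d (Δ ρ) = Δ α := by
        have : (d ∘ₗ Δ) ρ = Δ α := by rw [hρ, hz]
        simpa using this
      refine ⟨α + d ρ, ?_, ?_, ?_, ⟨-ρ, ?_⟩⟩
      · have hdρ : d ρ ∈ 𝒱 k := by
          have h1 := hd (k - 1) ρ hρk
          have : k - 1 + 1 = k := by ring
          rwa [this] at h1
        exact Submodule.add_mem _ hαk hdρ
      · have h := hanti ρ
        rw [hρeq] at h
        rw [map_add]
        exact h
      · rw [map_add, hdα, hdd' ρ, zero_add]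
      · rw [map_neg]
        abel
  · -- projection is chain map: d (ker Δ) ⊆ im Δ
    intro x hx
    obtain ⟨s, c, hc, hsum, hprop⟩ := hodge_components 𝒱 hinternal Δ (-1) hgΔ x
    have hcΔ : ∀ j : ℤ, Δ (c j) = 0 := by
      intro j
      have h := hprop (j - 1) (by rw [hx]; exact Submodule.zero_mem _)
      have h1 := h.1
      have : j - 1 - (-1) = j := by ring
      rw [this] at h1
      rw [h1, hx]
    have hdx : d x ∈ LinearMap.range Δ := by
      rw [hsum, map_sum]
      refine Submodule.sum_mem _ ?_
      intro j hj
      refine hrΔ ?_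
      have hmem : d (c j) ∈ LinearMap.range (d ∘ₗ Δ) ⊓ 𝒱 (j + 1) := by
        rw [heq (j + 1)]
        exact ⟨⟨⟨c j, rfl⟩, by simpa [LinearMap.mem_ker] using hΔd (c j) (hcΔ j)⟩,
          hd j (c j) (hc j)⟩
      exact hmem.1
    obtain ⟨y, hy⟩ := hdx
    exact ⟨y, hy.symm⟩
  · -- projection quasi-iso
    intro k
    constructor
    · rintro α hαk hΔα hdα ⟨β, rfl⟩
      have hmem : Δ β ∈ LinearMap.range (d ∘ₗ Δ) ⊓ 𝒱 k := by
        rw [heq' k]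
        exact ⟨⟨⟨β, rfl⟩, by simpa [LinearMap.mem_ker] using hdα⟩, hαk⟩
      obtain ⟨⟨y, hy⟩, -⟩ := hmem
      exact ⟨Δ y, hΔΔ' y, by simpa using hy.symm⟩
    · intro α hαk hΔα
      have hmem : d α ∈ LinearMap.range (d ∘ₗ Δ) ⊓ 𝒱 (k + 1) := by
        rw [heq (k + 1)]
        exact ⟨⟨⟨α, rfl⟩, by simpa [LinearMap.mem_ker] using hΔd α hΔα⟩, hd k α hαk⟩
      obtain ⟨⟨z, hz⟩, hmem'⟩ := hmem
      obtain ⟨s, c, hc, hsum, hprop⟩ := hodge_components 𝒱 hinternal (d ∘ₗ Δ) 0 hgΔd z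
      have hgz : (d ∘ₗ Δ) z ∈ 𝒱 (k + 1) := by rw [hz]; exact hmem'
      obtain ⟨hρ, -⟩ := hprop (k + 1) hgz
      set ρ := c (k + 1 - 0) with hρdef
      have hρk : ρ ∈ 𝒱 (k + 1) := by
        have := hc (k + 1 - 0)
        simpa [hρdef] using this
      have hρeq : d (Δ ρ) = d α := by
        have : (d ∘ₗ Δ) ρ = d α := by rw [hρ, hz]
        simpa using this
      refine ⟨α - Δ ρ, ?_, ?_, ?_, ⟨ρ, ?_⟩⟩
      · have hΔρ : Δ ρ ∈ 𝒱 k := by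
          have h1 := hΔ (k + 1) ρ hρk
          have : k + 1 - 1 = k := by ring
          rwa [this] at h1
        exact Submodule.sub_mem _ hαk hΔρ
      · rw [map_sub, hΔα, hΔΔ' ρ, sub_zero]
      · rw [map_sub, hρeq, sub_self]
      · abel
  · -- common representatives
    intro k α hαk β hβk hdα hΔα hdβ hΔβ
    constructor
    · rintro ⟨γ, hγ⟩
      have hmem : α - β ∈ LinearMap.range (d ∘ₗ Δ) ⊓ 𝒱 k := by
        rw [heq k]
        refine ⟨⟨⟨γ, hγ.symm⟩, ?_⟩, Submodule.sub_mem _ hαk hβk⟩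
        simp [LinearMap.mem_ker, map_sub, hΔα, hΔβ]
      obtain ⟨y, hy⟩ := hrΔ hmem.1
      exact ⟨y, hy.symm⟩
    · rintro ⟨γ, hγ⟩
      have hmem : α - β ∈ LinearMap.range (d ∘ₗ Δ) ⊓ 𝒱 k := by
        rw [heq' k]
        refine ⟨⟨⟨γ, hγ.symm⟩, ?_⟩, Submodule.sub_mem _ hαk hβk⟩
        simp [LinearMap.mem_ker, map_sub, hdα, hdβ]
      obtain ⟨y, hy⟩ := hrd hmem.1
      exact ⟨y, hy.symm⟩
end
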